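/- arXiv:math-ph/0212078 — 2 statements merged into one kernel-verified Lean document; each statement's English description precedes it below -/
import Mathlib

section
/- Let α > 2, β > 0, and α/(α-2) < γ < 3α/(α-2), and set η = 3αγ/(2γ+α). Then 3 < η, and the function x ↦ 1 - exp(-u(x)) is integrable over ℝ³, where u(x) = g·(|x⊥|^{2α/β} + |x₃|^{2γ/β})^{-β/2} and g > 0. -/
/-!
Splitting `η/3 = 1 / (1/α + 1/α + 1/γ)` into the weights `(η/3)/α, (η/3)/α, (η/3)/γ`, weighted
AM–GM gives `∏ᵢ max(1, |xᵢ|)^{η/3} ≤ max(1, ρ(x))` for `ρ(x) = (|x⊥|^{2α/β} + |x₃|^{2γ/β})^{β/2}`,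
which dominates `|x⊥|^α` and `|x₃|^γ`. Since `1 - e^{-g/ρ} ≤ min(1, g/ρ) ≤ max(1,g)/max(1,ρ)`,
the integrand is bounded by a constant times the product `∏ᵢ max(1, |xᵢ|)^{-η/3}`, which is
integrable exactly when `η > 3`.
-/

open MeasureTheory Real Filter

/-- The anisotropic model potential `u(x) = g (|x⊥|^{2α/β} + |x₃|^{2γ/β})^{-β/2}`. -/
noncomputable def uFun (g α β γ : ℝ) (x : EuclideanSpace ℝ (Fin 3)) : ℝ :=
  g * (Real.sqrt ((x 0) ^ 2 + (x 1) ^ 2) ^ (2 * α / β) + |x 2| ^ (2 * γ / β)) ^ (-(β / 2))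

lemma integrable_max_one_abs_rpow_neg {p : ℝ} (hp : 1 < p) :
    Integrable (fun s : ℝ => max 1 |s| ^ (-p)) := by
  have hdim : ((Module.finrank ℝ ℝ : ℕ) : ℝ) < p := by simpa using hp
  refine ((integrable_one_add_norm (μ := volume) hdim).const_mul ((2 : ℝ) ^ p)).mono'
    (by fun_prop : Measurable fun s : ℝ => max 1 |s| ^ (-p)).aestronglyMeasurable
    (ae_of_all _ fun s => ?_)
  have hm : (0 : ℝ) < max 1 |s| := one_pos.trans_le (le_max_left _ _)
  have hle : 1 + ‖s‖ ≤ 2 * max 1 |s| := by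
    rw [Real.norm_eq_abs]; linarith [le_max_left 1 |s|, le_max_right 1 |s|]
  rw [Real.norm_of_nonneg (by positivity)]
  calc max 1 |s| ^ (-p) = 2 ^ p * (2 * max 1 |s|) ^ (-p) := by
        rw [Real.mul_rpow zero_le_two hm.le, ← mul_assoc, ← Real.rpow_add two_pos,
          add_neg_cancel, Real.rpow_zero, one_mul]
    _ ≤ 2 ^ p * (1 + ‖s‖) ^ (-p) :=
        mul_le_mul_of_nonneg_left
          (Real.rpow_le_rpow_of_nonpos (by positivity) hle (by linarith)) (by positivity)

lemma integrable_prod_max_one_abs_rpow_neg {ι : Type*} [Fintype ι] {p : ℝ} (hp : 1 < p) :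
    Integrable (fun x : EuclideanSpace ℝ ι => ∏ i, max 1 |x i| ^ (-p)) :=
  ((EuclideanSpace.volume_preserving_symm_measurableEquiv_toLp ι).integrable_comp_emb
    (MeasurableEquiv.measurableEmbedding _)).mpr
    (Integrable.fintype_prod fun _ => integrable_max_one_abs_rpow_neg hp)

lemma max_one_rpow_le_max_one {c e r : ℝ} (h : c ^ e ≤ r) :
    max 1 c ^ e ≤ max 1 r := by
  rcases le_total c 1 with hc1 | hc1
  · rw [max_eq_left hc1, Real.one_rpow]; exact le_max_left _ _
  · rw [max_eq_right hc1]; exact h.trans (le_max_right _ _)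

lemma prod_rpow_le_of_sum_eq_one {ι : Type*} (s : Finset ι) {w z : ι → ℝ} {M : ℝ}
    (hw : ∀ i ∈ s, 0 ≤ w i) (hw₁ : ∑ i ∈ s, w i = 1) (hz : ∀ i ∈ s, 0 ≤ z i)
    (hzM : ∀ i ∈ s, z i ≤ M) : ∏ i ∈ s, z i ^ w i ≤ M :=
  calc ∏ i ∈ s, z i ^ w i ≤ ∑ i ∈ s, w i * z i :=
        Real.geom_mean_le_arith_mean_weighted s w z hw hw₁ hz
    _ ≤ ∑ i ∈ s, w i * M := Finset.sum_le_sum fun i hi => by gcongr; exacts [hw i hi, hzM i hi]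
    _ = M := by rw [← Finset.sum_mul, hw₁, one_mul]

theorem integrable_of_norm_le_div_max_one {ι E : Type*} [Fintype ι] [Nonempty ι]
    [NormedAddCommGroup E] {f : EuclideanSpace ℝ ι → E} {ρ : EuclideanSpace ℝ ι → ℝ}
    {p : ι → ℝ} {C : ℝ} (hf_meas : AEStronglyMeasurable f) (hp : ∀ i, 0 < p i)
    (hsum : ∑ i, (p i)⁻¹ < 1) (hρ : ∀ x i, |x i| ^ p i ≤ ρ x)
    (hf : ∀ x, ‖f x‖ ≤ C / max 1 (ρ x)) : Integrable f := by
  set q := (∑ i, (p i)⁻¹)⁻¹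
  have hsum_pos : 0 < ∑ i, (p i)⁻¹ :=
    Finset.sum_pos (fun i _ => inv_pos.2 (hp i)) Finset.univ_nonempty
  have hq : 1 < q := one_lt_inv₀ hsum_pos |>.2 hsum
  refine ((integrable_prod_max_one_abs_rpow_neg hq).const_mul C).mono' hf_meas
    (ae_of_all _ fun x => ?_)
  have hM : 0 < max 1 (ρ x) := one_pos.trans_le (le_max_left _ _)
  have hm : ∀ i, 0 < max 1 |x i| := fun i => one_pos.trans_le (le_max_left _ _)
  have hprod : ∏ i, max 1 |x i| ^ q ≤ max 1 (ρ x) :=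
    calc ∏ i, max 1 |x i| ^ q = ∏ i, (max 1 |x i| ^ p i) ^ (q / p i) := by
          refine Finset.prod_congr rfl fun i _ => ?_
          rw [← Real.rpow_mul (hm i).le, mul_div_cancel₀ _ (hp i).ne']
      _ ≤ max 1 (ρ x) := by
          refine prod_rpow_le_of_sum_eq_one _ (fun i _ => div_nonneg (by positivity) (hp i).le)
            ?_ (fun i _ => (Real.rpow_pos_of_pos (hm i) _).le)
            (fun i _ => max_one_rpow_le_max_one (hρ x i))
          simp_rw [div_eq_mul_inv]
          rw [← Finset.mul_sum, inv_mul_cancel₀ hsum_pos.ne']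
  have hC : 0 ≤ C := by
    simpa [div_nonneg_iff, hM, not_le.2 hM] using (norm_nonneg _).trans (hf x)
  calc ‖f x‖ ≤ C / max 1 (ρ x) := hf x
    _ ≤ C / ∏ i, max 1 |x i| ^ q :=
        div_le_div_of_nonneg_left hC
          (Finset.prod_pos fun i _ => Real.rpow_pos_of_pos (hm i) _) hprod
    _ = C * ∏ i, max 1 |x i| ^ (-q) := by
        simp_rw [Real.rpow_neg (hm _).le, Finset.prod_inv_distrib, div_eq_mul_inv]

lemma abs_one_sub_exp_neg_le_min {u : ℝ} (hu : 0 ≤ u) : |1 - exp (-u)| ≤ min 1 u := by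
  rw [abs_of_nonneg (by linarith [Real.exp_le_one_iff.2 (neg_nonpos.2 hu)])]
  exact le_min (by linarith [Real.exp_pos (-u)]) (by linarith [Real.one_sub_le_exp_neg u])

lemma min_one_div_le_max_one_div_max_one {g r : ℝ} (hr : 0 ≤ r) :
    min 1 (g / r) ≤ max 1 g / max 1 r := by
  rcases le_total r 1 with hr1 | hr1
  · rw [max_eq_left hr1, div_one]; exact (min_le_left _ _).trans (le_max_left _ _)
  · rw [max_eq_right hr1]
    exact (min_le_right _ _).trans (div_le_div_of_nonneg_right (le_max_right _ _) hr)

noncomputable def uRadius (α β γ : ℝ) (x : EuclideanSpace ℝ (Fin 3)) : ℝ :=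
  (Real.sqrt ((x 0) ^ 2 + (x 1) ^ 2) ^ (2 * α / β) + |x 2| ^ (2 * γ / β)) ^ (β / 2)

lemma uRadius_nonneg (α β γ : ℝ) (x : EuclideanSpace ℝ (Fin 3)) : 0 ≤ uRadius α β γ x := by
  unfold uRadius; positivity

lemma uFun_eq_div_uRadius (g α β γ : ℝ) (x : EuclideanSpace ℝ (Fin 3)) :
    uFun g α β γ x = g / uRadius α β γ x := by
  rw [uFun, uRadius, Real.rpow_neg (by positivity)]
  exact (div_eq_mul_inv _ _).symm

lemma rpow_le_add_rpow_div {a b c β : ℝ} (ha : 0 ≤ a) (hb : 0 ≤ b) (hβ : 0 < β) :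
    a ^ c ≤ (a ^ (2 * c / β) + b) ^ (β / 2) := by
  calc a ^ c = (a ^ (2 * c / β)) ^ (β / 2) := by
        rw [← Real.rpow_mul ha]; congr 1; field_simp
    _ ≤ (a ^ (2 * c / β) + b) ^ (β / 2) := by gcongr; linarith

lemma abs_rpow_le_uRadius {α β γ : ℝ} (hα : 0 ≤ α) (hβ : 0 < β)
    (x : EuclideanSpace ℝ (Fin 3)) (i : Fin 3) : |x i| ^ ![α, α, γ] i ≤ uRadius α β γ x := by
  have hperp : ∀ c, |c| ≤ √(x 0 ^ 2 + x 1 ^ 2) → |c| ^ α ≤ uRadius α β γ x := fun c hc =>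
    (Real.rpow_le_rpow (abs_nonneg c) hc hα).trans
      (rpow_le_add_rpow_div (Real.sqrt_nonneg _) (by positivity) hβ)
  fin_cases i
  · exact hperp (x 0) (Real.abs_le_sqrt (le_add_of_nonneg_right (sq_nonneg _)))
  · exact hperp (x 1) (Real.abs_le_sqrt (le_add_of_nonneg_left (sq_nonneg _)))
  · show |x 2| ^ γ ≤ uRadius α β γ x
    rw [uRadius, add_comm]
    exact rpow_le_add_rpow_div (abs_nonneg _) (by positivity) hβ

theorem eta_gt_three_and_integrable_general (g α β γ : ℝ) (hg : 0 < g) (hα : 2 < α) (hβ : 0 < β)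
    (hγ₁ : α / (α - 2) < γ) :
    3 < 3 * α * γ / (2 * γ + α) ∧
      Integrable (fun x : EuclideanSpace ℝ (Fin 3) => 1 - Real.exp (-(uFun g α β γ x))) := by
  have hα₀ : 0 < α := by linarith
  have hγ₀ : 0 < γ := (div_pos hα₀ (by linarith)).trans hγ₁
  have hkey : α + 2 * γ < α * γ := by
    have := (div_lt_iff₀ (by linarith : (0 : ℝ) < α - 2)).1 hγ₁
    linarith
  refine ⟨by rw [lt_div_iff₀ (by positivity)]; linarith, ?_⟩
  have hmeas : Measurable fun x => 1 - Real.exp (-(uFun g α β γ x)) := by unfold uFun; fun_prop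
  have hp : ∀ i, 0 < ![α, α, γ] i := by intro i; fin_cases i <;> simp [hα₀, hγ₀]
  have hsum : ∑ i, (![α, α, γ] i)⁻¹ < 1 := by
    simp only [Fin.sum_univ_three, Matrix.cons_val_zero, Matrix.cons_val_one, Matrix.cons_val_two,
      Matrix.head_cons, Matrix.tail_cons]
    rw [show α⁻¹ + α⁻¹ + γ⁻¹ = (α + 2 * γ) / (α * γ) by field_simp; ring,
      div_lt_one (by positivity)]
    exact hkey
  refine integrable_of_norm_le_div_max_one (C := max 1 g) hmeas.aestronglyMeasurable hp hsum
    (abs_rpow_le_uRadius hα₀.le hβ) fun x => ?_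
  rw [uFun_eq_div_uRadius, Real.norm_eq_abs]
  exact (abs_one_sub_exp_neg_le_min (div_nonneg hg.le (uRadius_nonneg _ _ _ _))).trans
    (min_one_div_le_max_one_div_max_one (uRadius_nonneg _ _ _ _))

/-- If `α > 2`, `β > 0` and `α/(α-2) < γ < 3α/(α-2)` then `η := 3αγ/(2γ+α) > 3` and
`x ↦ 1 - exp(-u(x))` is integrable over `ℝ³`. -/
theorem eta_gt_three_and_integrable (g α β γ : ℝ) (hg : 0 < g) (hα : 2 < α) (hβ : 0 < β)
    (hγ₁ : α / (α - 2) < γ) (hγ₂ : γ < 3 * α / (α - 2)) :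
    3 < 3 * α * γ / (2 * γ + α) ∧
      Integrable (fun x : EuclideanSpace ℝ (Fin 3) => 1 - Real.exp (-(uFun g α β γ x))) :=
  eta_gt_three_and_integrable_general g α β γ hg hα hβ hγ₁
end

section
/- For g > 0 and α > 1, ∫_ℝ (1 - exp(-g·|t|^{-α})) dt = 2·g^{1/α}·Γ(1 - 1/α). -/
open MeasureTheory Real Filter Set Topology

/-!
The integrand is even and, for `t > 0`, `1 - exp (-g t^{-α})` is the survival function of a
Fréchet law of shape `α` and scale `g^{1/α}`, so half the integral is the mean of that law.
Integrating by parts against `t` (the boundary terms vanish because `α > 1`) turns it into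
`g α ∫ t^{-α} exp (-g t^{-α}) dt`, and the substitution `t ↦ 1/t` makes this the Gamma integral
`∫ x^{α-2} exp (-g x^α) dx = g^{-(α-1)/α} Γ((α-1)/α) / α`.
-/

lemma one_sub_exp_neg_nonneg {y : ℝ} (hy : 0 ≤ y) : 0 ≤ 1 - exp (-y) := by
  linarith [exp_le_one_iff.mpr (neg_nonpos.mpr hy)]

lemma one_sub_exp_neg_le_one (y : ℝ) : 1 - exp (-y) ≤ 1 := by
  linarith [exp_pos (-y)]

lemma one_sub_exp_neg_le (y : ℝ) : 1 - exp (-y) ≤ y := by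
  linarith [add_one_le_exp (-y)]

lemma rpow_neg_two_mul_rpow_inv_eq {p q b x : ℝ} (hx : 0 < x) :
    x ^ ((-1 : ℝ) - 1) * ((x ^ (-1 : ℝ)) ^ (-q) * exp (-b * (x ^ (-1 : ℝ)) ^ (-p))) =
      x ^ (q - 2) * exp (-b * x ^ p) := by
  have inv_pow (r : ℝ) : (x ^ (-1 : ℝ)) ^ (-r) = x ^ r := by
    rw [← rpow_mul hx.le, neg_one_mul, neg_neg]
  rw [inv_pow, inv_pow, ← mul_assoc, ← rpow_add hx]
  ring_nf

lemma integrableOn_rpow_neg_mul_exp_neg_mul_rpow_neg {p q b : ℝ} (hp : 0 < p) (hq : 1 < q)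
    (hb : 0 < b) : IntegrableOn (fun t : ℝ ↦ t ^ (-q) * exp (-b * t ^ (-p))) (Ioi 0) := by
  rw [← integrableOn_Ioi_comp_rpow_iff' _ (p := -1) (by norm_num)]
  refine (integrableOn_rpow_mul_exp_neg_mul_rpow (s := q - 2) (by linarith) hp hb).congr_fun
    (fun x hx ↦ ?_) measurableSet_Ioi
  exact (rpow_neg_two_mul_rpow_inv_eq hx).symm

lemma integral_rpow_neg_mul_exp_neg_mul_rpow_neg {p q b : ℝ} (hp : 0 < p) (hq : 1 < q)
    (hb : 0 < b) :
    ∫ t in Ioi (0 : ℝ), t ^ (-q) * exp (-b * t ^ (-p)) =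
      b ^ (-(q - 1) / p) * (1 / p) * Gamma ((q - 1) / p) := by
  rw [← integral_comp_rpow_Ioi _ (p := -1) (by norm_num),
    setIntegral_congr_fun measurableSet_Ioi (g := fun x ↦ x ^ (q - 2) * exp (-b * x ^ p)),
    integral_rpow_mul_exp_neg_mul_rpow hp (by linarith) hb]
  · ring_nf
  · intro x hx
    simp only [abs_neg, abs_one, one_mul, smul_eq_mul]
    exact rpow_neg_two_mul_rpow_inv_eq hx

noncomputable def frechetTail (g α t : ℝ) : ℝ := 1 - exp (-(g * t ^ (-α)))

section
variable {g α : ℝ}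

lemma frechetTail_nonneg (hg : 0 ≤ g) {t : ℝ} (ht : 0 ≤ t) : 0 ≤ frechetTail g α t :=
  one_sub_exp_neg_nonneg (by positivity)

lemma frechetTail_le_one (t : ℝ) : frechetTail g α t ≤ 1 := one_sub_exp_neg_le_one _

lemma frechetTail_le (t : ℝ) : frechetTail g α t ≤ g * t ^ (-α) := one_sub_exp_neg_le _

lemma measurable_frechetTail : Measurable (frechetTail g α) := by
  unfold frechetTail
  fun_prop

lemma integrableOn_frechetTail (hg : 0 ≤ g) (hα : 1 < α) :
    IntegrableOn (frechetTail g α) (Ioi 0) := by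
  have norm_le {t : ℝ} (ht : 0 < t) (M : ℝ) (hM : frechetTail g α t ≤ M) :
      ‖frechetTail g α t‖ ≤ M := by
    rw [norm_of_nonneg (frechetTail_nonneg hg ht.le)]; exact hM
  rw [← Ioc_union_Ioi_eq_Ioi zero_le_one]
  refine IntegrableOn.union ?_ ?_
  · refine Measure.integrableOn_of_bounded (M := 1) (by simp)
      measurable_frechetTail.aestronglyMeasurable ?_
    filter_upwards [ae_restrict_mem measurableSet_Ioc] with t ht
    exact norm_le ht.1 _ (frechetTail_le_one t)
  · have hdom := (integrableOn_Ioi_rpow_of_lt (a := -α) (by linarith) one_pos).const_mul g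
    refine Integrable.mono' hdom measurable_frechetTail.aestronglyMeasurable ?_
    filter_upwards [ae_restrict_mem measurableSet_Ioi] with t ht
    exact norm_le (one_pos.trans ht) _ (frechetTail_le t)

lemma hasDerivAt_frechetTail {x : ℝ} (hx : 0 < x) :
    HasDerivAt (frechetTail g α) (-(g * α) * x ^ (-α - 1) * exp (-(g * x ^ (-α)))) x := by
  have hpow := (hasDerivAt_rpow_const (p := -α) (Or.inl hx.ne')).const_mul g
  refine (hpow.fun_neg.exp.const_sub 1).congr_deriv ?_
  ring

lemma hasDerivAt_mul_frechetTail {x : ℝ} (hx : 0 < x) :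
    HasDerivAt (fun t ↦ t * frechetTail g α t)
      (frechetTail g α x - g * α * (x ^ (-α) * exp (-g * x ^ (-α)))) x := by
  refine ((hasDerivAt_id' x).fun_mul (hasDerivAt_frechetTail hx)).congr_deriv ?_
  rw [rpow_sub_one hx.ne']
  field_simp
  ring

lemma continuousWithinAt_mul_frechetTail_zero (hg : 0 ≤ g) :
    ContinuousWithinAt (fun t ↦ t * frechetTail g α t) (Ici 0) 0 := by
  rw [ContinuousWithinAt, zero_mul]
  refine squeeze_zero' ?_ ?_ (tendsto_nhdsWithin_of_tendsto_nhds tendsto_id)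
  · filter_upwards [self_mem_nhdsWithin] with t (ht : 0 ≤ t)
    exact mul_nonneg ht (frechetTail_nonneg hg ht)
  · filter_upwards [self_mem_nhdsWithin] with t (ht : 0 ≤ t)
    exact mul_le_of_le_one_right ht (frechetTail_le_one t)

lemma tendsto_mul_frechetTail_atTop (hg : 0 ≤ g) (hα : 1 < α) :
    Tendsto (fun t ↦ t * frechetTail g α t) atTop (𝓝 0) := by
  have decay := (tendsto_rpow_neg_atTop (y := α - 1) (by linarith)).const_mul g
  rw [mul_zero] at decay
  refine squeeze_zero' ?_ ?_ decay
  · filter_upwards [eventually_ge_atTop 0] with t ht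
    exact mul_nonneg ht (frechetTail_nonneg hg ht)
  · filter_upwards [eventually_gt_atTop 0] with t ht
    calc t * frechetTail g α t ≤ t * (g * t ^ (-α)) :=
          mul_le_mul_of_nonneg_left (frechetTail_le t) ht.le
      _ = g * t ^ (-(α - 1)) := by rw [neg_sub, ← neg_add_eq_sub, rpow_add_one ht.ne']; ring

lemma integral_frechetTail (hg : 0 < g) (hα : 1 < α) :
    ∫ t in Ioi 0, frechetTail g α t = g ^ (1 / α) * Gamma (1 - 1 / α) := by
  have hα₀ : 0 < α := one_pos.trans hα
  have hint := integrableOn_rpow_neg_mul_exp_neg_mul_rpow_neg hα₀ hα hg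
  have ibp := integral_Ioi_of_hasDerivAt_of_tendsto
    (continuousWithinAt_mul_frechetTail_zero hg.le) (fun x hx ↦ hasDerivAt_mul_frechetTail hx)
    ((integrableOn_frechetTail hg.le hα).sub (hint.const_mul (g * α)))
    (tendsto_mul_frechetTail_atTop hg.le hα)
  rw [integral_sub (integrableOn_frechetTail hg.le hα) (hint.const_mul _), integral_const_mul,
    integral_rpow_neg_mul_exp_neg_mul_rpow_neg hα₀ hα hg] at ibp
  calc ∫ t in Ioi 0, frechetTail g α t
      = g * α * (g ^ (-(α - 1) / α) * (1 / α) * Gamma ((α - 1) / α)) := by linarith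
    _ = g ^ (1 + -(α - 1) / α) * Gamma ((α - 1) / α) := by
      rw [rpow_add hg, rpow_one]; field_simp
    _ = g ^ (1 / α) * Gamma (1 - 1 / α) := by
      rw [show 1 + -(α - 1) / α = 1 / α by field_simp; ring,
        show (α - 1) / α = 1 - 1 / α by field_simp]
end

/-- One-dimensional analogue: `∫_ℝ (1 - e^{-g |t|^{-α}}) dt = 2 g^{1/α} Γ(1 - 1/α)`. -/
theorem integral_one_sub_exp_one_dim (g α : ℝ) (hg : 0 < g) (hα : 1 < α) :
    ∫ t : ℝ, (1 - Real.exp (-(g * |t| ^ (-α)))) = 2 * g ^ (1 / α) * Real.Gamma (1 - 1 / α) := by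
  rw [mul_assoc, ← integral_frechetTail hg hα]
  exact integral_comp_abs (f := frechetTail g α)
end
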